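/- arXiv:1903.06009 — 3 statements merged into one kernel-verified Lean document; each statement's English description precedes it below -/
import Mathlib

section
/- Let Z_1, …, Z_n be non-negatively associated real random variables with |Z_i| ≤ C almost surely for each i, where C > 0 is a constant. Then for every λ > 0, | E[exp(λ·Σ_{i=1}^{n} Z_i)] − Π_{i=1}^{n} E[exp(λ·Z_i)] | ≤ λ²·exp(n·λ·C)·Σ_{1 ≤ i < j ≤ n} Cov(Z_i, Z_j). -/
open MeasureTheory ProbabilityTheory Real Finset

/-- Real random variables `Z 0, …, Z (n-1)` on a common probability space are
*non-negatively associated* if for every pair of bounded measurable functions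
`f g : ℝⁿ → ℝ` that are nondecreasing in each coordinate (i.e. monotone for the
coordinatewise order), `Cov(f(Z), g(Z)) ≥ 0`. -/
def NonNegativelyAssociated {Ω : Type*} [MeasureSpace Ω] {n : ℕ}
    (Z : Fin n → Ω → ℝ) : Prop :=
  ∀ f g : (Fin n → ℝ) → ℝ,
    Measurable f → Measurable g →
    (∃ Cf, ∀ x, |f x| ≤ Cf) → (∃ Cg, ∀ x, |g x| ≤ Cg) →
    Monotone f → Monotone g →
    0 ≤ (∫ ω, f (fun i => Z i ω) * g (fun i => Z i ω)) -
        (∫ ω, f (fun i => Z i ω)) * (∫ ω, g (fun i => Z i ω))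

/-! Newman's argument. Clip every `Z i` to `[-C, C]`, which changes nothing almost surely, and add
the variables one at a time. With `S` the sum of the variables so far, `P` the product of their
exponential moments and `Zₐ` the new variable,
`E[e^{λ(Zₐ + S)}] - E[e^{λZₐ}] P = Cov(e^{λZₐ}, e^{λS}) + E[e^{λZₐ}] (E[e^{λS}] - P)`.
The covariance is nonnegative by association, and since `e^{λt}` has slope at most `λ e^{λB}` on
`t ≤ B`, the functions `λ e^{λB} S ± e^{λS}` are monotone; association applied to these sums and
differences bounds it by `λ² e^{λ(|s| + 1)C} Σᵢ Cov(Zᵢ, Zₐ)`. Induction on the number of variables,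
using `E[e^{λZₐ}] ≤ e^{λC}`, gives the bound. -/

open Function

lemma Real.exp_sub_exp_le_of_le {a b M : ℝ} (hab : a ≤ b) (hbM : b ≤ M) :
    exp b - exp a ≤ exp M * (b - a) :=
  calc exp b - exp a = exp b * (1 - exp (a - b)) := by rw [mul_sub, ← exp_add]; ring_nf
    _ ≤ exp b * (b - a) :=
      mul_le_mul_of_nonneg_left (by linarith [add_one_le_exp (a - b)]) (exp_pos b).le
    _ ≤ exp M * (b - a) := mul_le_mul_of_nonneg_right (exp_le_exp.2 hbM) (sub_nonneg.2 hab)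

lemma Monotone.const_mul_sub_exp {α : Type*} [Preorder α] {T : α → ℝ} (hT : Monotone T)
    {B l : ℝ} (hl : 0 ≤ l) (hTB : ∀ x, T x ≤ B) :
    Monotone fun x => l * exp (l * B) * T x - exp (l * T x) := by
  intro x y hxy
  have := Real.exp_sub_exp_le_of_le (mul_le_mul_of_nonneg_left (hT hxy) hl)
    (mul_le_mul_of_nonneg_left (hTB y) hl)
  dsimp only
  linarith

lemma exists_abs_add_le {α : Type*} {f g : α → ℝ} (hf : ∃ C, ∀ x, |f x| ≤ C)
    (hg : ∃ C, ∀ x, |g x| ≤ C) : ∃ C, ∀ x, |(f + g) x| ≤ C :=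
  let ⟨C, hC⟩ := hf; let ⟨D, hD⟩ := hg
  ⟨C + D, fun x => (abs_add_le _ _).trans (add_le_add (hC x) (hD x))⟩

lemma exists_abs_sub_le {α : Type*} {f g : α → ℝ} (hf : ∃ C, ∀ x, |f x| ≤ C)
    (hg : ∃ C, ∀ x, |g x| ≤ C) : ∃ C, ∀ x, |(f - g) x| ≤ C :=
  let ⟨C, hC⟩ := hf; let ⟨D, hD⟩ := hg
  ⟨C + D, fun x => (abs_sub _ _).trans (add_le_add (hC x) (hD x))⟩

lemma exists_abs_smul_le {α : Type*} {f : α → ℝ} (c : ℝ) (hf : ∃ C, ∀ x, |f x| ≤ C) :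
    ∃ C, ∀ x, |(c • f) x| ≤ C :=
  let ⟨C, hC⟩ := hf
  ⟨|c| * C, fun x => by
    rw [Pi.smul_apply, smul_eq_mul, abs_mul]; exact mul_le_mul_of_nonneg_left (hC x) (abs_nonneg c)⟩

lemma abs_exp_mul_le {t B l : ℝ} (hl : 0 ≤ l) (ht : |t| ≤ B) : |exp (l * t)| ≤ exp (l * B) := by
  rw [abs_of_pos (exp_pos _)]
  exact exp_le_exp.2 (mul_le_mul_of_nonneg_left (abs_le.1 ht).2 hl)

lemma Finset.sum_sum_filter_lt_insert_of_forall_lt {ι M : Type*} [LinearOrder ι]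
    [AddCommMonoid M] (c : ι → ι → M) {s : Finset ι} {a : ι} (ha : ∀ x ∈ s, x < a) :
    ∑ i ∈ insert a s, ∑ j ∈ insert a s with i < j, c i j =
      ∑ i ∈ s, ∑ j ∈ s with i < j, c i j + ∑ i ∈ s, c i a := by
  have has : a ∉ s := fun h => lt_irrefl a (ha a h)
  rw [sum_insert has, filter_insert, if_neg (lt_irrefl a),
    filter_eq_empty_iff.2 fun j hj => not_lt.2 (ha j hj).le, sum_empty, zero_add,
    ← sum_add_distrib]
  refine sum_congr rfl fun i hi => ?_
  rw [filter_insert, if_pos (ha i hi), sum_insert fun h => has (mem_filter.1 h).1, add_comm]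

/-- Clipping to `[-C, C]`: association only tests functions bounded on all of `ℝⁿ`, whereas the
`Z i` are bounded only almost surely. -/
def clip (C x : ℝ) : ℝ := max (-C) (min x C)

lemma monotone_clip (C : ℝ) : Monotone (clip C) :=
  monotone_const.max (monotone_id.min monotone_const)

lemma measurable_clip (C : ℝ) : Measurable (clip C) :=
  measurable_const.max (measurable_id.min measurable_const)

lemma abs_clip_le {C : ℝ} (hC : 0 ≤ C) (x : ℝ) : |clip C x| ≤ C :=
  abs_le.2 ⟨le_max_left _ _, max_le (by linarith) (min_le_right _ _)⟩

lemma clip_of_abs_le {C x : ℝ} (h : |x| ≤ C) : clip C x = x := by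
  rw [abs_le] at h
  rw [clip, min_eq_left h.2, max_eq_right h.1]

lemma abs_sum_clip_le {ι : Type*} {C : ℝ} (hC : 0 ≤ C) (s : Finset ι) (x : ι → ℝ) :
    |∑ i ∈ s, clip C (x i)| ≤ #s * C :=
  calc |∑ i ∈ s, clip C (x i)| ≤ ∑ i ∈ s, |clip C (x i)| := abs_sum_le_sum_abs _ _
    _ ≤ ∑ _i ∈ s, C := sum_le_sum fun i _ => abs_clip_le hC (x i)
    _ = #s * C := by rw [sum_const, nsmul_eq_mul]

lemma ProbabilityTheory.covariance_congr_ae {Ω : Type*} {_ : MeasurableSpace Ω} {μ : Measure Ω}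
    {X X' Y Y' : Ω → ℝ} (hX : X =ᵐ[μ] X') (hY : Y =ᵐ[μ] Y') : cov[X, Y; μ] = cov[X', Y'; μ] := by
  simp only [covariance, integral_congr_ae hX, integral_congr_ae hY]
  refine integral_congr_ae ?_
  filter_upwards [hX, hY] with ω hXω hYω
  rw [hXω, hYω]

lemma abs_integral_mul_sub_integral_mul_le {Ω : Type*} {_ : MeasurableSpace Ω} {μ : Measure Ω}
    [IsProbabilityMeasure μ] {X Y : Ω → ℝ} (hX : MemLp X 2 μ) (hY : MemLp Y 2 μ) (p : ℝ) :
    |(∫ ω, X ω * Y ω ∂μ) - (∫ ω, X ω ∂μ) * p| ≤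
      |cov[X, Y; μ]| + |∫ ω, X ω ∂μ| * |(∫ ω, Y ω ∂μ) - p| :=
  calc |(∫ ω, X ω * Y ω ∂μ) - (∫ ω, X ω ∂μ) * p|
      = |cov[X, Y; μ] + (∫ ω, X ω ∂μ) * ((∫ ω, Y ω ∂μ) - p)| := by
        rw [covariance_eq_sub hX hY]; congr 1; simp only [Pi.mul_apply]; ring
    _ ≤ |cov[X, Y; μ]| + |∫ ω, X ω ∂μ| * |(∫ ω, Y ω ∂μ) - p| := by
        rw [← abs_mul]; exact abs_add_le _ _

lemma memLp_comp_swap {Ω ι : Type*} {_ : MeasurableSpace Ω} {μ : Measure Ω} [IsFiniteMeasure μ]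
    {Z : ι → Ω → ℝ} (hZ : ∀ i, Measurable (Z i)) {f : (ι → ℝ) → ℝ} (hf : Measurable f)
    (hfb : ∃ C, ∀ x, |f x| ≤ C) : MemLp (f ∘ swap Z) 2 μ :=
  let ⟨C, hC⟩ := hfb
  .of_bound (hf.comp (measurable_pi_lambda _ hZ)).aestronglyMeasurable C
    (ae_of_all _ fun _ => hC _)

namespace NonNegativelyAssociated

variable {Ω : Type*} [MeasureSpace Ω] [IsProbabilityMeasure (ℙ : Measure Ω)] {n : ℕ}
  {Z : Fin n → Ω → ℝ}
variable (hNA : NonNegativelyAssociated Z) (hZ : ∀ i, Measurable (Z i))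
include hNA hZ

theorem covariance_nonneg {f g : (Fin n → ℝ) → ℝ} (hf : Measurable f) (hg : Measurable g)
    (hfb : ∃ C, ∀ x, |f x| ≤ C) (hgb : ∃ C, ∀ x, |g x| ≤ C) (hfm : Monotone f)
    (hgm : Monotone g) : 0 ≤ cov[f ∘ swap Z, g ∘ swap Z] := by
  rw [covariance_eq_sub (memLp_comp_swap (μ := ℙ) hZ hf hfb) (memLp_comp_swap (μ := ℙ) hZ hg hgb)]
  exact hNA f g hf hg hfb hgb hfm hgm

theorem covariance_le_of_monotone_add_sub {f g F G : (Fin n → ℝ) → ℝ} (hf : Measurable f)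
    (hg : Measurable g) (hF : Measurable F) (hG : Measurable G) (hfb : ∃ C, ∀ x, |f x| ≤ C)
    (hgb : ∃ C, ∀ x, |g x| ≤ C) (hFb : ∃ C, ∀ x, |F x| ≤ C) (hGb : ∃ C, ∀ x, |G x| ≤ C)
    (hFf : Monotone (F - f)) (hFf' : Monotone (F + f)) (hGg : Monotone (G - g))
    (hGg' : Monotone (G + g)) : cov[f ∘ swap Z, g ∘ swap Z] ≤ cov[F ∘ swap Z, G ∘ swap Z] := by
  have h₁ := hNA.covariance_nonneg hZ (hF.sub hf) (hG.add hg) (exists_abs_sub_le hFb hfb)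
    (exists_abs_add_le hGb hgb) hFf hGg'
  have h₂ := hNA.covariance_nonneg hZ (hF.add hf) (hG.sub hg) (exists_abs_add_le hFb hfb)
    (exists_abs_sub_le hGb hgb) hFf' hGg
  have hf₂ := memLp_comp_swap (μ := ℙ) hZ hf hfb
  have hg₂ := memLp_comp_swap (μ := ℙ) hZ hg hgb
  have hF₂ := memLp_comp_swap (μ := ℙ) hZ hF hFb
  have hG₂ := memLp_comp_swap (μ := ℙ) hZ hG hGb
  simp only [Pi.sub_comp, Pi.add_comp] at h₁ h₂
  -- `Cov(F - f, G + g) + Cov(F + f, G - g) = 2 (Cov(F, G) - Cov(f, g))`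
  rw [covariance_sub_left hF₂ hf₂ (hG₂.add hg₂), covariance_add_right hF₂ hG₂ hg₂,
    covariance_add_right hf₂ hG₂ hg₂] at h₁
  rw [covariance_add_left hF₂ hf₂ (hG₂.sub hg₂), covariance_sub_right hF₂ hG₂ hg₂,
    covariance_sub_right hf₂ hG₂ hg₂] at h₂
  linarith

theorem abs_covariance_exp_le {T U : (Fin n → ℝ) → ℝ} (hT : Measurable T) (hU : Measurable U)
    (hTm : Monotone T) (hUm : Monotone U) {B B' l : ℝ} (hTB : ∀ x, |T x| ≤ B)
    (hUB : ∀ x, |U x| ≤ B') (hl : 0 ≤ l) :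
    |cov[(fun x => exp (l * T x)) ∘ swap Z, (fun x => exp (l * U x)) ∘ swap Z]| ≤
      l * exp (l * B) * (l * exp (l * B')) * cov[T ∘ swap Z, U ∘ swap Z] := by
  have hTe : Monotone fun x => exp (l * T x) := fun x y h =>
    exp_le_exp.2 (mul_le_mul_of_nonneg_left (hTm h) hl)
  have hUe : Monotone fun x => exp (l * U x) := fun x y h =>
    exp_le_exp.2 (mul_le_mul_of_nonneg_left (hUm h) hl)
  have hTeb : ∃ C, ∀ x, |exp (l * T x)| ≤ C := ⟨_, fun x => abs_exp_mul_le hl (hTB x)⟩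
  have hUeb : ∃ C, ∀ x, |exp (l * U x)| ≤ C := ⟨_, fun x => abs_exp_mul_le hl (hUB x)⟩
  rw [abs_of_nonneg (hNA.covariance_nonneg hZ (hT.const_mul l).exp (hU.const_mul l).exp hTeb hUeb
    hTe hUe)]
  calc _ ≤ cov[(l * exp (l * B)) • T ∘ swap Z, (l * exp (l * B')) • U ∘ swap Z] :=
        hNA.covariance_le_of_monotone_add_sub hZ (hT.const_mul l).exp (hU.const_mul l).exp
          (hT.const_smul _) (hU.const_smul _) hTeb hUeb (exists_abs_smul_le _ ⟨B, hTB⟩)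
          (exists_abs_smul_le _ ⟨B', hUB⟩)
          (hTm.const_mul_sub_exp hl fun x => (abs_le.1 (hTB x)).2)
          ((hTm.const_mul (by positivity)).add hTe)
          (hUm.const_mul_sub_exp hl fun x => (abs_le.1 (hUB x)).2)
          ((hUm.const_mul (by positivity)).add hUe)
    _ = _ := by rw [covariance_smul_left, covariance_smul_right]; ring

theorem abs_integral_exp_mul_exp_sub_le {T U : (Fin n → ℝ) → ℝ} (hT : Measurable T)
    (hU : Measurable U) (hTm : Monotone T) (hUm : Monotone U) {B B' l : ℝ}
    (hTB : ∀ x, |T x| ≤ B) (hUB : ∀ x, |U x| ≤ B') (hl : 0 ≤ l) (p : ℝ) :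
    |(∫ ω, exp (l * T (swap Z ω)) * exp (l * U (swap Z ω))) -
        (∫ ω, exp (l * T (swap Z ω))) * p| ≤
      l * exp (l * B) * (l * exp (l * B')) * cov[T ∘ swap Z, U ∘ swap Z] +
        exp (l * B) * |(∫ ω, exp (l * U (swap Z ω))) - p| := by
  have hmean : |∫ ω, exp (l * T (swap Z ω))| ≤ exp (l * B) := by
    simpa using norm_integral_le_of_norm_le_const (μ := ℙ)
      (f := fun ω => exp (l * T (swap Z ω))) (ae_of_all _ fun ω => abs_exp_mul_le hl (hTB _))
  calc _ ≤ |cov[(fun x => exp (l * T x)) ∘ swap Z, (fun x => exp (l * U x)) ∘ swap Z]| +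
        |∫ ω, exp (l * T (swap Z ω))| * |(∫ ω, exp (l * U (swap Z ω))) - p| :=
        abs_integral_mul_sub_integral_mul_le
          (memLp_comp_swap hZ (hT.const_mul l).exp ⟨_, fun x => abs_exp_mul_le hl (hTB x)⟩)
          (memLp_comp_swap hZ (hU.const_mul l).exp ⟨_, fun x => abs_exp_mul_le hl (hUB x)⟩) p
    _ ≤ _ := add_le_add (hNA.abs_covariance_exp_le hZ hT hU hTm hUm hTB hUB hl)
        (mul_le_mul_of_nonneg_right hmean (abs_nonneg _))

theorem abs_integral_exp_sum_clip_sub_prod_le {C l : ℝ} (hC : 0 ≤ C) (hl : 0 ≤ l)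
    (s : Finset (Fin n)) :
    |(∫ ω, exp (l * ∑ i ∈ s, clip C (Z i ω))) - ∏ i ∈ s, ∫ ω, exp (l * clip C (Z i ω))| ≤
      l ^ 2 * exp (l * #s * C) * ∑ i ∈ s, ∑ j ∈ s with i < j, cov[clip C ∘ Z i, clip C ∘ Z j] := by
  classical
  induction s using Finset.induction_on_max with
  | empty => simp
  | insert a s ha ih =>
    have has : a ∉ s := fun h => lt_irrefl a (ha a h)
    have hW : ∀ i, MemLp (clip C ∘ Z i) 2 := fun i =>
      .of_bound ((measurable_clip C).comp (hZ i)).aestronglyMeasurable C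
        (ae_of_all _ fun _ => abs_clip_le hC _)
    have hcov : cov[(fun x => clip C (x a)) ∘ swap Z, (fun x => ∑ i ∈ s, clip C (x i)) ∘ swap Z] =
        ∑ i ∈ s, cov[clip C ∘ Z i, clip C ∘ Z a] := by
      rw [← sum_congr rfl fun i _ => covariance_comm _ _]
      exact covariance_fun_sum_right' (fun i _ => hW i) (hW a)
    have hstep := hNA.abs_integral_exp_mul_exp_sub_le hZ (T := fun x => clip C (x a))
      (U := fun x => ∑ i ∈ s, clip C (x i))
      ((measurable_clip C).comp (measurable_pi_apply a))
      (Finset.measurable_sum s fun i _ => (measurable_clip C).comp (measurable_pi_apply i))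
      (fun x y h => monotone_clip C (h a))
      (fun x y h => sum_le_sum fun i _ => monotone_clip C (h i))
      (fun x => abs_clip_le hC (x a)) (abs_sum_clip_le hC s) hl
      (∏ i ∈ s, ∫ ω, exp (l * clip C (Z i ω)))
    rw [hcov] at hstep
    calc _ ≤ _ := by
          simpa only [sum_insert has, prod_insert has, mul_add, exp_add, swap] using hstep
      _ ≤ l * exp (l * C) * (l * exp (l * (#s * C))) *
            ∑ i ∈ s, cov[clip C ∘ Z i, clip C ∘ Z a] +
          exp (l * C) * (l ^ 2 * exp (l * #s * C) *
            ∑ i ∈ s, ∑ j ∈ s with i < j, cov[clip C ∘ Z i, clip C ∘ Z j]) := by gcongr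
      _ = _ := by
          rw [card_insert_of_notMem has, sum_sum_filter_lt_insert_of_forall_lt _ ha]
          push_cast
          rw [show l * (#s + 1) * C = l * C + l * (#s * C) by ring, exp_add,
            show l * #s * C = l * (#s * C) by ring]
          ring

end NonNegativelyAssociated

/-- **Covariance bound for non-negatively associated bounded random variables.**
If `Z 1, …, Z n` are non-negatively associated with `|Z i| ≤ C` a.s., then for every `λ > 0`,
`|E[exp(λ·Σᵢ Zᵢ)] − Πᵢ E[exp(λ·Zᵢ)]| ≤ λ²·exp(n·λ·C)·Σ_{i<j} Cov(Zᵢ, Zⱼ)`. -/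
theorem nonneg_associated_mgf_product_bound
    {Ω : Type*} [MeasureSpace Ω] [IsProbabilityMeasure (ℙ : Measure Ω)]
    (n : ℕ) (Z : Fin n → Ω → ℝ) (hmeas : ∀ i, Measurable (Z i))
    (C : ℝ) (hC : 0 < C)
    (hbdd : ∀ i, ∀ᵐ ω, |Z i ω| ≤ C)
    (hNA : NonNegativelyAssociated Z)
    (l : ℝ) (hl : 0 < l) :
    |(∫ ω, Real.exp (l * ∑ i, Z i ω)) - ∏ i, ∫ ω, Real.exp (l * Z i ω)| ≤
      l ^ 2 * Real.exp (n * l * C) *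
        ∑ i, ∑ j ∈ Finset.univ.filter (fun j => i < j),
          ((∫ ω, Z i ω * Z j ω) - (∫ ω, Z i ω) * (∫ ω, Z j ω)) := by
  have hclip : ∀ i, clip C ∘ Z i =ᵐ[ℙ] Z i := fun i => (hbdd i).mono fun _ => clip_of_abs_le
  have hcov : ∀ i j, cov[clip C ∘ Z i, clip C ∘ Z j] =
      (∫ ω, Z i ω * Z j ω) - (∫ ω, Z i ω) * (∫ ω, Z j ω) := fun i j => by
    have hZ : ∀ k, MemLp (Z k) 2 := fun k => .of_bound (hmeas k).aestronglyMeasurable C (hbdd k)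
    rw [covariance_congr_ae (hclip i) (hclip j), covariance_eq_sub (hZ i) (hZ j)]
    rfl
  calc _ = |(∫ ω, exp (l * ∑ i, clip C (Z i ω))) - ∏ i, ∫ ω, exp (l * clip C (Z i ω))| := by
        congr 2
        · refine integral_congr_ae ?_
          filter_upwards [ae_all_iff.2 hclip] with ω h
          simp_all
        · refine prod_congr rfl fun i _ => integral_congr_ae ?_
          filter_upwards [hclip i] with ω h
          simp_all
    _ ≤ _ := hNA.abs_integral_exp_sum_clip_sub_prod_le hmeas hC.le hl.le univ
    _ = _ := by simp_rw [hcov, card_univ, Fintype.card_fin, mul_comm l (n : ℝ)]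
end

section
/- Let b be a Bernoulli(q) random variable with q ∈ (0,1) and q ≠ 1/2, and set σ²_opt = ((1/2) − q) / log((1/q) − 1). Then: (i) b is σ²_opt-subGaussian, i.e., E[exp(λ(b − q))] ≤ exp(σ²_opt·λ²/2) for all real λ; and (ii) σ²_opt is optimal: for every σ² > 0 such that E[exp(λ(b − q))] ≤ exp(σ²·λ²/2) holds for all real λ, one has σ² ≥ σ²_opt. -/
/-!
Write `q = e^{-a} / (2 cosh a)` with `a = log (1/q - 1) / 2`. Then the centred moment
generating function of `b` is `λ ↦ e^{λ tanh a / 2} cosh (λ/2 - a) / cosh a` and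
`σ²_opt = tanh a / (4a)`, so after the substitution `x = λ/2 - a` the sub-Gaussian bound reads
`log cosh x ≤ log cosh a + tanh a / (2a) * (x² - a²)`: the tangent line inequality at `a²` for
the concave function `u ↦ log cosh √u`. It holds because `tanh x / x` decreases on `(0, ∞)`,
`tanh` being concave there. Equality at `x = a`, i.e. `λ = 4a`, gives optimality.
-/

open MeasureTheory ProbabilityTheory Real Set

theorem Real.hasDerivAt_tanh (x : ℝ) : HasDerivAt tanh (1 / cosh x ^ 2) x := by
  have h := (hasDerivAt_sinh x).div (hasDerivAt_cosh x) (cosh_pos x).ne'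
  rw [show sinh / cosh = tanh from funext fun y => (tanh_eq_sinh_div_cosh y).symm] at h
  refine h.congr_deriv ?_
  rw [← cosh_sq_sub_sinh_sq x]
  ring

theorem Real.concaveOn_tanh : ConcaveOn ℝ (Ici 0) tanh := by
  have hdiff : Differentiable ℝ tanh := fun x => (hasDerivAt_tanh x).differentiableAt
  refine AntitoneOn.concaveOn_of_deriv (convex_Ici 0) hdiff.continuous.continuousOn
    hdiff.differentiableOn ?_
  rw [funext fun x => (hasDerivAt_tanh x).deriv, interior_Ici]
  intro x hx y hy hxy
  have : cosh x ≤ cosh y := cosh_le_cosh.2 (by rwa [abs_of_pos hx, abs_of_pos hy])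
  exact one_div_le_one_div_of_le (by positivity) (by gcongr)

theorem Real.antitoneOn_tanh_div_self : AntitoneOn (fun x => tanh x / x) (Ioi 0) := by
  intro x hx y hy hxy
  have := concaveOn_tanh.slope_anti self_mem_Ici ⟨mem_Ici.2 hx.le, hx.ne'⟩
    ⟨mem_Ici.2 hy.le, hy.ne'⟩ hxy
  simpa [slope_def_field] using this

theorem Real.log_cosh_le_of_pos {a x : ℝ} (ha : 0 < a) (hx : 0 ≤ x) :
    log (cosh x) ≤ log (cosh a) + tanh a / (2 * a) * (x ^ 2 - a ^ 2) := by
  set g := fun y => tanh a / (2 * a) * y ^ 2 - log (cosh y)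
  have hg : ∀ y, HasDerivAt g (tanh a / a * y - tanh y) y := fun y => by
    have := ((hasDerivAt_pow 2 y).const_mul (tanh a / (2 * a))).sub
      ((hasDerivAt_cosh y).log (cosh_pos y).ne')
    refine this.congr_deriv ?_
    rw [tanh_eq_sinh_div_cosh y]
    field_simp
    ring
  have hgdiff : Differentiable ℝ g := fun y => (hg y).differentiableAt
  suffices g a ≤ g x by simp only [g] at this; linarith
  rcases le_total x a with hxa | hax
  · refine antitoneOn_of_deriv_nonpos (convex_Icc 0 a) hgdiff.continuous.continuousOn
      hgdiff.differentiableOn (fun y hy => ?_) ⟨hx, hxa⟩ ⟨ha.le, le_rfl⟩ hxa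
    rw [interior_Icc] at hy
    have hslope := antitoneOn_tanh_div_self hy.1 ha hy.2.le
    rw [(hg y).deriv, sub_nonpos]
    exact (mul_le_mul_of_nonneg_right hslope hy.1.le).trans_eq (div_mul_cancel₀ _ hy.1.ne')
  · refine monotoneOn_of_deriv_nonneg (convex_Ici a) hgdiff.continuous.continuousOn
      hgdiff.differentiableOn (fun y hy => ?_) self_mem_Ici hax hax
    rw [interior_Ici] at hy
    have hy0 : 0 < y := ha.trans hy
    have hslope := antitoneOn_tanh_div_self ha hy0 hy.le
    rw [(hg y).deriv, sub_nonneg]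
    exact (div_mul_cancel₀ _ hy0.ne').symm.trans_le (mul_le_mul_of_nonneg_right hslope hy0.le)

theorem Real.log_cosh_le {a : ℝ} (ha : a ≠ 0) (x : ℝ) :
    log (cosh x) ≤ log (cosh a) + tanh a / (2 * a) * (x ^ 2 - a ^ 2) := by
  have hslope : tanh |a| / (2 * |a|) = tanh a / (2 * a) := by
    rcases abs_cases a with ⟨h, _⟩ | ⟨h, _⟩
    · rw [h]
    · rw [h, tanh_neg, mul_neg, neg_div_neg_eq]
  have h := log_cosh_le_of_pos (abs_pos.2 ha) (abs_nonneg x)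
  rwa [cosh_abs, cosh_abs, sq_abs, sq_abs, hslope] at h

theorem integral_comp_eq_of_bernoulli {Ω : Type*} [MeasurableSpace Ω] {μ : Measure Ω}
    [IsProbabilityMeasure μ] {b : Ω → ℝ} (hb : Measurable b) (hbval : ∀ ω, b ω = 0 ∨ b ω = 1)
    {q : ℝ} (hq : 0 ≤ q) (hbdist : μ {ω | b ω = 1} = ENNReal.ofReal q) (f : ℝ → ℝ) :
    ∫ ω, f (b ω) ∂μ = (1 - q) * f 0 + q * f 1 := by
  set A := {ω | b ω = 1}
  have hA : MeasurableSet A := hb (measurableSet_singleton 1)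
  have hμA : μ.real A = q := by rw [measureReal_def, hbdist, ENNReal.toReal_ofReal hq]
  have hf : (fun ω => f (b ω)) =
      fun ω => A.indicator (fun _ => f 1) ω + Aᶜ.indicator (fun _ => f 0) ω := by
    funext ω
    rcases hbval ω with h | h <;> simp [A, h]
  rw [hf, integral_add ((integrable_const _).indicator hA)
    ((integrable_const _).indicator hA.compl),
    integral_indicator_const _ hA, integral_indicator_const _ hA.compl, measureReal_compl hA,
    hμA, probReal_univ, smul_eq_mul, smul_eq_mul]
  ring

theorem eq_exp_neg_div_two_cosh {q : ℝ} (h0 : 0 < q) (h1 : q < 1) :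
    q = exp (-(log (1 / q - 1) / 2)) / (2 * cosh (log (1 / q - 1) / 2)) := by
  set a := log (1 / q - 1) / 2
  have hexp : exp a * exp a = 1 / q - 1 := by
    rw [← exp_add, show a + a = log (1 / q - 1) by ring]
    exact exp_log (by rw [lt_sub_iff_add_lt, zero_add, lt_div_iff₀ h0]; linarith)
  rw [cosh_eq, exp_neg]
  field_simp
  field_simp at hexp
  linarith

theorem half_sub_eq_tanh_div_two {q a : ℝ} (hq : q = exp (-a) / (2 * cosh a)) :
    1 / 2 - q = tanh a / 2 := by
  rw [hq, tanh_eq_sinh_div_cosh, sinh_eq, cosh_eq]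
  field_simp
  ring

theorem bernoulli_mgf_eq_cosh {q a : ℝ} (hq : q = exp (-a) / (2 * cosh a)) (l : ℝ) :
    (1 - q) * exp (l * (0 - q)) + q * exp (l * (1 - q)) =
      exp (l * (tanh a / 2)) * (cosh (l / 2 - a) / cosh a) := by
  rw [← half_sub_eq_tanh_div_two hq]
  have h1q : 1 - q = exp a / (2 * cosh a) := by
    rw [hq, cosh_eq]
    field_simp
    ring
  rw [cosh_eq (l / 2 - a), show l * (0 - q) = l * (1 / 2 - q) + -(l / 2) by ring,
    show l * (1 - q) = l * (1 / 2 - q) + l / 2 by ring, exp_add, exp_add, h1q,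
    show -(l / 2 - a) = a + -(l / 2) by ring, exp_add, exp_sub, hq, exp_neg, exp_neg]
  field_simp
  ring

theorem exp_mul_cosh_div_cosh_le_exp_sq {a : ℝ} (ha : a ≠ 0) (l : ℝ) :
    exp (l * (tanh a / 2)) * (cosh (l / 2 - a) / cosh a) ≤
      exp (tanh a / (4 * a) * l ^ 2 / 2) := by
  have hcosh :
      cosh (l / 2 - a) / cosh a ≤ exp (tanh a / (2 * a) * ((l / 2 - a) ^ 2 - a ^ 2)) := by
    refine (log_le_iff_le_exp (by positivity)).1 ?_
    rw [log_div (cosh_pos _).ne' (cosh_pos _).ne']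
    linarith [log_cosh_le ha (l / 2 - a)]
  calc exp (l * (tanh a / 2)) * (cosh (l / 2 - a) / cosh a)
      ≤ exp (l * (tanh a / 2)) * exp (tanh a / (2 * a) * ((l / 2 - a) ^ 2 - a ^ 2)) := by gcongr
    _ = exp (tanh a / (4 * a) * l ^ 2 / 2) := by
      rw [← exp_add]
      congr 1
      field_simp
      ring

/-- **Optimal proxy variance of a Bernoulli random variable.**
For a Bernoulli(q) random variable `b` with `q ∈ (0,1)`, `q ≠ 1/2`, set
`σ²_opt = ((1/2) − q)/log((1/q) − 1)`. Then (i) `b` is `σ²_opt`-subGaussian, i.e.,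
`E[exp(λ(b − q))] ≤ exp(σ²_opt·λ²/2)` for all real `λ`, and (ii) `σ²_opt` is optimal:
any `σ² > 0` with `E[exp(λ(b − q))] ≤ exp(σ²·λ²/2)` for all real `λ` satisfies
`σ² ≥ σ²_opt`. -/
theorem bernoulli_optimal_proxy_variance
    {Ω : Type*} [MeasureSpace Ω] [IsProbabilityMeasure (ℙ : Measure Ω)]
    (q : ℝ) (hq : q ∈ Set.Ioo (0 : ℝ) 1) (hq2 : q ≠ 1 / 2)
    (b : Ω → ℝ) (hbmeas : Measurable b)
    (hbval : ∀ ω, b ω = 0 ∨ b ω = 1)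
    (hbdist : ℙ {ω | b ω = 1} = ENNReal.ofReal q) :
    (∀ l : ℝ, (∫ ω, Real.exp (l * (b ω - q))) ≤
        Real.exp ((1 / 2 - q) / Real.log (1 / q - 1) * l ^ 2 / 2)) ∧
      (∀ σsq : ℝ, 0 < σsq →
        (∀ l : ℝ, (∫ ω, Real.exp (l * (b ω - q))) ≤ Real.exp (σsq * l ^ 2 / 2)) →
        (1 / 2 - q) / Real.log (1 / q - 1) ≤ σsq) := by
  obtain ⟨hq0, hq1⟩ := hq
  set a := log (1 / q - 1) / 2 with ha_def
  have hqa : q = exp (-a) / (2 * cosh a) := eq_exp_neg_div_two_cosh hq0 hq1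
  have ha : a ≠ 0 := fun h => hq2 (by rw [hqa, h]; simp)
  have hσ : (1 / 2 - q) / log (1 / q - 1) = tanh a / (4 * a) := by
    rw [half_sub_eq_tanh_div_two hqa, show log (1 / q - 1) = 2 * a by rw [ha_def]; ring]
    field_simp
    ring
  have hmgf (l : ℝ) :
      ∫ ω, exp (l * (b ω - q)) = exp (l * (tanh a / 2)) * (cosh (l / 2 - a) / cosh a) := by
    rw [integral_comp_eq_of_bernoulli hbmeas hbval hq0.le hbdist (fun x => exp (l * (x - q))),
      bernoulli_mgf_eq_cosh hqa]
  rw [hσ]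
  refine ⟨fun l => (hmgf l).trans_le (exp_mul_cosh_div_cosh_le_exp_sq ha l),
    fun σsq _ hsub => ?_⟩
  have h := hsub (4 * a)
  rw [hmgf, show 4 * a / 2 - a = a by ring, div_self (cosh_pos a).ne', mul_one, exp_le_exp] at h
  rw [show tanh a / (4 * a) = 4 * a * (tanh a / 2) / ((4 * a) ^ 2 / 2) by field_simp,
    div_le_iff₀ (by positivity)]
  linarith
end

section
/- Let b be a Bernoulli(q) random variable with q ∈ (0,1). Then b is strictly subGaussian — i.e., E[exp(λ(b − q))] ≤ exp(q(1−q)·λ²/2) holds for all real λ — if and only if q = 1/2. -/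
/-!
Write `ψ(λ) = q e^{λ(1-q)} + (1-q) e^{-λq}` for the moment generating function of `b - q`.
For `q = 1/2` it is `cosh (λ/2) ≤ exp (λ²/8)`. Otherwise the third central moment
`q(1-q)(1-2q)` does not vanish, and the cubic Taylor bound `1 + x + x²/2 + x³/6 ≤ eˣ` gives
`ψ(λ) ≥ 1 + σ²λ²/2 + σ²(1-2q)λ³/6` with `σ² = q(1-q)`. At `λ = 1 - 2q` the cubic term is
`σ²λ⁴/6`, which beats the quadratic error `(σ²λ²/2)²` of `exp (σ²λ²/2) ≤ 1 + y + y²`.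
-/

open MeasureTheory ProbabilityTheory Real

theorem le_of_hasDerivAt_of_monotone {f f' : ℝ → ℝ} (hf : ∀ x, HasDerivAt f (f' x) x)
    (hf' : Monotone f') {a : ℝ} (ha : f' a = 0) (x : ℝ) : f a ≤ f x := by
  have hcont : Continuous f := continuous_iff_continuousAt.2 fun y => (hf y).continuousAt
  rcases lt_trichotomy a x with hax | rfl | hxa
  · obtain ⟨c, hc, hslope⟩ :=
      exists_hasDerivAt_eq_slope f f' hax hcont.continuousOn fun y _ => hf y
    have := (le_div_iff₀ (sub_pos.2 hax)).1 (hslope ▸ ha ▸ hf' hc.1.le)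
    linarith
  · exact le_rfl
  · obtain ⟨c, hc, hslope⟩ :=
      exists_hasDerivAt_eq_slope f f' hxa hcont.continuousOn fun y _ => hf y
    have := (div_le_iff₀ (sub_pos.2 hxa)).1 (hslope ▸ ha ▸ hf' hc.2.le)
    linarith

theorem cubic_le_exp (x : ℝ) : 1 + x + x ^ 2 / 2 + x ^ 3 / 6 ≤ exp x := by
  have hquad : Monotone fun t => exp t - (1 + t + t ^ 2 / 2) := by
    refine monotone_of_hasDerivAt_nonneg (f' := fun t => exp t - (1 + t)) (fun t => ?_)
      fun t => sub_nonneg.2 (by linarith [add_one_le_exp t])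
    exact ((hasDerivAt_exp t).sub (((hasDerivAt_id' t).const_add 1).add
      ((hasDerivAt_pow 2 t).div_const 2))).congr_deriv (by ring)
  have hcubic : ∀ t, HasDerivAt (fun t => exp t - (1 + t + t ^ 2 / 2 + t ^ 3 / 6))
      (exp t - (1 + t + t ^ 2 / 2)) t := fun t =>
    ((hasDerivAt_exp t).sub ((((hasDerivAt_id' t).const_add 1).add
      ((hasDerivAt_pow 2 t).div_const 2)).add ((hasDerivAt_pow 3 t).div_const 6))).congr_deriv
      (by ring)
  simpa using le_of_hasDerivAt_of_monotone hcubic hquad (a := 0) (by simp) x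

theorem integral_comp_of_forall_eq_zero_or_one {Ω : Type*} [MeasurableSpace Ω]
    {μ : Measure Ω} [IsProbabilityMeasure μ] {b : Ω → ℝ} (hb : Measurable b)
    (hb01 : ∀ ω, b ω = 0 ∨ b ω = 1) (f : ℝ → ℝ) :
    ∫ ω, f (b ω) ∂μ =
      μ.real {ω | b ω = 1} * f 1 + (1 - μ.real {ω | b ω = 1}) * f 0 := by
  set A := {ω | b ω = 1}
  have hA : MeasurableSet A := hb (measurableSet_singleton 1)
  have hfb : (fun ω => f (b ω)) = fun ω => A.indicator (fun _ => f 1 - f 0) ω + f 0 := by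
    funext ω
    rcases hb01 ω with h | h <;> simp [A, h]
  rw [hfb, integral_add ((integrable_const _).indicator hA) (integrable_const _),
    integral_indicator_const _ hA, integral_const, probReal_univ]
  simp only [smul_eq_mul]
  ring

noncomputable def centeredBernoulliMGF (q l : ℝ) : ℝ :=
  q * exp (l * (1 - q)) + (1 - q) * exp (-(l * q))

theorem centeredBernoulliMGF_half (l : ℝ) : centeredBernoulliMGF (1 / 2) l = cosh (l / 2) := by
  rw [centeredBernoulliMGF, cosh_eq]
  ring_nf

theorem cubic_le_centeredBernoulliMGF {q : ℝ} (hq0 : 0 ≤ q) (hq1 : q ≤ 1) (l : ℝ) :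
    1 + q * (1 - q) * l ^ 2 / 2 + q * (1 - q) * (1 - 2 * q) * l ^ 3 / 6 ≤
      centeredBernoulliMGF q l := by
  have h1 := mul_le_mul_of_nonneg_left (cubic_le_exp (l * (1 - q))) hq0
  have h0 := mul_le_mul_of_nonneg_left (cubic_le_exp (-(l * q))) (sub_nonneg.2 hq1)
  rw [centeredBernoulliMGF]
  linear_combination h1 + h0

theorem exp_lt_centeredBernoulliMGF {q : ℝ} (hq : q ∈ Set.Ioo (0 : ℝ) 1) (hq_half : q ≠ 1 / 2) :
    exp (q * (1 - q) * (1 - 2 * q) ^ 2 / 2) < centeredBernoulliMGF q (1 - 2 * q) := by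
  obtain ⟨hq0, hq1⟩ := hq
  set l := 1 - 2 * q with hl_def
  set a := q * (1 - q)
  have ha : 0 < a := mul_pos hq0 (sub_pos.2 hq1)
  have hl : l ^ 2 = 1 - 4 * a := by ring
  have hl0 : l ≠ 0 := fun h => hq_half (by linarith)
  have hl4 : 0 < a * l ^ 4 := mul_pos ha (Even.pow_pos (by decide) hl0)
  set y := a * l ^ 2 / 2 with hy_def
  have hy : |y| ≤ 1 := by
    rw [abs_le, hy_def, hl]
    constructor <;> nlinarith [sq_nonneg l]
  calc exp y
      ≤ 1 + y + y ^ 2 := by linarith [(abs_le.1 (abs_exp_sub_one_sub_id_le hy)).2]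
    _ < 1 + y + a * l ^ 4 / 6 := by
        have : y ^ 2 = a * l ^ 4 * a / 4 := by ring
        nlinarith [sq_nonneg l]
    _ = 1 + a * l ^ 2 / 2 + a * (1 - 2 * q) * l ^ 3 / 6 := by ring
    _ ≤ centeredBernoulliMGF q l := cubic_le_centeredBernoulliMGF hq0.le hq1.le l

/-- **A Bernoulli random variable is strictly subGaussian iff `q = 1/2`.**
For a Bernoulli(q) random variable `b` with `q ∈ (0,1)`,
`E[exp(λ(b − q))] ≤ exp(q(1−q)·λ²/2)` holds for all real `λ` if and only if `q = 1/2`. -/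
theorem bernoulli_strictly_subgaussian_iff
    {Ω : Type*} [MeasureSpace Ω] [IsProbabilityMeasure (ℙ : Measure Ω)]
    (q : ℝ) (hq : q ∈ Set.Ioo (0 : ℝ) 1)
    (b : Ω → ℝ) (hbmeas : Measurable b)
    (hbval : ∀ ω, b ω = 0 ∨ b ω = 1)
    (hbdist : ℙ {ω | b ω = 1} = ENNReal.ofReal q) :
    (∀ l : ℝ, (∫ ω, Real.exp (l * (b ω - q))) ≤
        Real.exp (q * (1 - q) * l ^ 2 / 2)) ↔ q = 1 / 2 := by
  have hprob : (ℙ : Measure Ω).real {ω | b ω = 1} = q := by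
    rw [measureReal_def, hbdist, ENNReal.toReal_ofReal hq.1.le]
  have hmgf (l : ℝ) : ∫ ω, exp (l * (b ω - q)) = centeredBernoulliMGF q l := by
    rw [integral_comp_of_forall_eq_zero_or_one hbmeas hbval (fun x => exp (l * (x - q))), hprob,
      centeredBernoulliMGF]
    ring_nf
  simp_rw [hmgf]
  constructor
  · intro hsub
    by_contra hq_half
    exact (exp_lt_centeredBernoulliMGF hq hq_half).not_ge (hsub (1 - 2 * q))
  · rintro rfl l
    rw [centeredBernoulliMGF_half]
    convert cosh_le_exp_half_sq (l / 2) using 2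
    ring
end
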